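/- Let G = (V, E_1, …, E_N) be an infinite, locally finite, connected, quasi-transitive edge-coloured graph with N colours. For every p ∈ [0,1]^{N−1}: if q < q_ψ(p), then χ(p,q) < ∞. Consequently q_ψ(p) ≤ q_χ(p) for every p ∈ [0,1]^{N−1}. -/

import Mathlib

open MeasureTheory ENNReal Set
open scoped Classical

namespace InhomPerc

variable {V : Type*} {N : ℕ}

/-- The edge set of an edge-coloured graph: the union of all colour classes. -/
def Eset (E : Fin N → Set (Sym2 V)) : Set (Sym2 V) := ⋃ i, E i

/-- The colour classes are mutually disjoint. -/
def DisjointColours (E : Fin N → Set (Sym2 V)) : Prop :=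
  ∀ i j : Fin N, i ≠ j → Disjoint (E i) (E j)

/-- Every edge is a pair of two *distinct* vertices. -/
def NoLoops (E : Fin N → Set (Sym2 V)) : Prop := ∀ e ∈ Eset E, ¬ e.IsDiag

/-- The underlying simple graph of the edge-coloured graph. -/
def graph (E : Fin N → Set (Sym2 V)) : SimpleGraph V where
  Adj u v := u ≠ v ∧ s(u, v) ∈ Eset E
  symm := by
    constructor
    intro u v h
    refine ⟨h.1.symm, ?_⟩
    rw [Sym2.eq_swap]
    exact h.2
  loopless := ⟨fun v h => h.1 rfl⟩

/-- Local finiteness: every vertex lies in finitely many edges. -/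
def LocFin (E : Fin N → Set (Sym2 V)) : Prop :=
  ∀ v : V, {e ∈ Eset E | v ∈ e}.Finite

/-- Connectivity of the edge-coloured graph. -/
def ConnectedGraph (E : Fin N → Set (Sym2 V)) : Prop := (graph E).Connected

/-- Quasi-transitivity: the vertices can be partitioned into finitely many classes
such that vertices in the same class are related by a coloured graph automorphism. -/
def QuasiTransitive (E : Fin N → Set (Sym2 V)) : Prop :=
  ∃ (k : ℕ) (c : V → Fin k), ∀ u v : V, c u = c v →
    ∃ f : V ≃ V, (∀ (i : Fin N) (e : Sym2 V), e ∈ E i ↔ e.map f ∈ E i) ∧ f v = u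

/-- Graph distance. -/
noncomputable def dist (E : Fin N → Set (Sym2 V)) (u v : V) : ℕ := (graph E).dist u v

/-- Percolation configurations: each (potential) edge is open (`true`) or closed. -/
abbrev Config (V : Type*) := Sym2 V → Bool

/-- `x` is joined to `y` by a path of open edges all of whose endpoints lie in `S`. -/
def ConnIn (E : Fin N → Set (Sym2 V)) (ω : Config V) (S : Set V) (x y : V) : Prop :=
  Relation.ReflTransGen
    (fun a b => a ∈ S ∧ b ∈ S ∧ s(a, b) ∈ Eset E ∧ ω s(a, b) = true) x y

/-- The open cluster of `x`. -/
def cluster (E : Fin N → Set (Sym2 V)) (ω : Config V) (x : V) : Set V :=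
  {y | ConnIn E ω Set.univ x y}

/-- The retention probability of an edge `e` under the parameter vector `r`:
`r i` for an edge of colour `i`, `0` for non-edges (by disjointness at most one
summand is nonzero). -/
noncomputable def edgeProb (E : Fin N → Set (Sym2 V)) (r : Fin N → ℝ) (e : Sym2 V) : ℝ :=
  ∑ i : Fin N, if e ∈ E i then r i else 0

/-- `P` is the family of inhomogeneous percolation (product) measures: for each valid
parameter vector `r` it is a probability measure whose cylinder probabilities are the
products of the individual edge-retention probabilities. -/
def IsPercFamily (E : Fin N → Set (Sym2 V)) (P : (Fin N → ℝ) → Measure (Config V)) : Prop :=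
  ∀ r : Fin N → ℝ, (∀ i, r i ∈ Icc (0 : ℝ) 1) →
    IsProbabilityMeasure (P r) ∧
    ∀ (F : Finset (Sym2 V)) (σ : Sym2 V → Bool),
      P r {ω | ∀ e ∈ F, ω e = σ e} =
        ∏ e ∈ F, ENNReal.ofReal (if σ e then edgeProb E r e else 1 - edgeProb E r e)

/-- The full parameter vector `(p₁, …, p_{N-1}, q)`. -/
noncomputable def pFull (N : ℕ) (p : Fin (N - 1) → ℝ) (q : ℝ) : Fin N → ℝ :=
  fun i => if h : (i : ℕ) < N - 1 then p ⟨i, h⟩ else q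

/-- The percolation function `θ`. -/
noncomputable def theta (E : Fin N → Set (Sym2 V)) (P : (Fin N → ℝ) → Measure (Config V))
    (r : Fin N → ℝ) : ℝ≥0∞ :=
  ⨆ x : V, P r {ω | (cluster E ω x).Infinite}

/-- The susceptibility `χ`. -/
noncomputable def chi (E : Fin N → Set (Sym2 V)) (P : (Fin N → ℝ) → Measure (Config V))
    (r : Fin N → ℝ) : ℝ≥0∞ :=
  ⨆ x : V, ∫⁻ ω, ((cluster E ω x).encard : ℝ≥0∞) ∂(P r)

/-- The `θ`-critical surface. -/
noncomputable def qTheta (E : Fin N → Set (Sym2 V)) (P : (Fin N → ℝ) → Measure (Config V))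
    (p : Fin (N - 1) → ℝ) : ℝ :=
  sInf (insert (1 : ℝ) {q | q ∈ Icc (0 : ℝ) 1 ∧ 0 < theta E P (pFull N p q)})

/-- The `χ`-critical surface. -/
noncomputable def qChi (E : Fin N → Set (Sym2 V)) (P : (Fin N → ℝ) → Measure (Config V))
    (p : Fin (N - 1) → ℝ) : ℝ :=
  sInf (insert (1 : ℝ) {q | q ∈ Icc (0 : ℝ) 1 ∧ chi E P (pFull N p q) = ⊤})

/-- `ψ_{p,q}(x,S) = Σᵢ pᵢ Σ_{{y,z} ∈ ΔS ∩ Eᵢ} P(x ↔_S y)` (each boundary edge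
is enumerated by its unique orientation `y ∈ S`, `z ∉ S`). -/
noncomputable def psi (E : Fin N → Set (Sym2 V)) (P : (Fin N → ℝ) → Measure (Config V))
    (r : Fin N → ℝ) (x : V) (S : Finset V) : ℝ≥0∞ :=
  ∑ i : Fin N, ENNReal.ofReal (r i) *
    ∑ y ∈ S, ∑' z : V,
      (if z ∉ S ∧ s(y, z) ∈ E i then P r {ω | ConnIn E ω ↑S x y} else 0)

/-- The `ψ`-critical surface. -/
noncomputable def qPsi (E : Fin N → Set (Sym2 V)) (P : (Fin N → ℝ) → Measure (Config V))
    (p : Fin (N - 1) → ℝ) : ℝ :=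
  sSup {q | q ∈ Icc (0 : ℝ) 1 ∧
    ∀ x : V, ∃ S : Finset V, x ∈ S ∧ psi E P (pFull N p q) x S < 1}

/-- The event that `x` is joined by an open path to `∂Λ_k^x` (the set of vertices
at graph distance exactly `k` from `x`). -/
def ConnSphere (E : Fin N → Set (Sym2 V)) (ω : Config V) (x : V) (k : ℕ) : Prop :=
  ∃ y : V, dist E x y = k ∧ ConnIn E ω Set.univ x y

/-!
The cylinder formula makes the edge states independent, so events determined by disjoint finite
sets of edges are independent, increasing events are monotone in the parameters (condition on one
edge at a time), and colour-preserving automorphisms preserve the measure.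

Condition on the open cluster `C` of `x` inside a finite `S ∋ x`: an open path from `x` to
`y ∉ S` must leave `C` through an open edge `uv` of `ΔS` and then reach `y` without touching `C`.
The events `{C = A}`, `{uv open}` and `{v ↔ y off A}` depend on disjoint sets of edges, which
gives the Simon–Lieb inequality `P(x ↔ y) ≤ Σ_{u ∈ S, v ∉ S} P(x ↔_S u) p_{uv} P(v ↔ y)`.
Summing over `y`, the susceptibility `χ_Λ` of percolation restricted to a finite `Λ` satisfies
`χ_Λ ≤ |S| + ψ(x, S) χ_Λ`. By quasi-transitivity and automorphism invariance of `ψ`, one may take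
`|S| ≤ M` and `ψ(x, S) ≤ δ < 1` uniformly in `x`, so `χ_Λ ≤ M / (1 - δ)`, and letting `Λ ↑ V`
gives `χ ≤ M / (1 - δ)`. Since `ψ` is increasing in `q`, this holds for every `q < q_ψ(p)`.
-/

end InhomPerc

theorem Relation.ReflTransGen.exists_last_exit {α : Type*} {R : α → α → Prop} {A : Set α}
    {x y : α} (h : Relation.ReflTransGen R x y) (hx : x ∈ A) (hy : y ∉ A) :
    ∃ u ∈ A, ∃ v ∉ A, R u v ∧ Relation.ReflTransGen (fun a b => R a b ∧ a ∉ A ∧ b ∉ A) v y := by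
  induction h with
  | refl => exact absurd hx hy
  | @tail b c _ hbc ih =>
    by_cases hb : b ∈ A
    · exact ⟨b, hb, c, hy, hbc, .refl⟩
    · obtain ⟨u, hu, v, hv, huv, hvb⟩ := ih hb
      exact ⟨u, hu, v, hv, huv, hvb.tail ⟨hbc, hb, hy⟩⟩

section DependsOn

variable {ι : Type*}

theorem preimage_image_restrict_of_dependsOn {X : Set (ι → Bool)} {F : Finset ι}
    (hX : DependsOn (· ∈ X) ↑F) :
    (fun ω (e : F) => ω e) ⁻¹' ((fun ω (e : F) => ω e) '' X) = X := by
  refine Subset.antisymm ?_ (subset_preimage_image _ _)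
  rintro ω ⟨ω', hω', heq⟩
  exact cast (hX fun e he => congrFun heq ⟨e, he⟩) hω'

theorem measurableSet_of_dependsOn {X : Set (ι → Bool)} {F : Finset ι}
    (hX : DependsOn (· ∈ X) ↑F) : MeasurableSet X := by
  rw [← preimage_image_restrict_of_dependsOn hX]
  exact measurable_pi_lambda _ (fun e => measurable_pi_apply _) (toFinite _).measurableSet

theorem dependsOn_mem_inter {α : Type*} {X Y : Set (ι → α)} {s t : Set ι}
    (hX : DependsOn (· ∈ X) s) (hY : DependsOn (· ∈ Y) t) : DependsOn (· ∈ X ∩ Y) (s ∪ t) :=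
  fun _ _ h => congrArg₂ (· ∧ ·) (hX fun i hi => h i (.inl hi)) (hY fun i hi => h i (.inr hi))

theorem dependsOn_eval_eq {α : Type*} (i : ι) (a : α) :
    DependsOn (· ∈ {ω : ι → α | ω i = a}) ↑({i} : Finset ι) :=
  fun _ _ h => congrArg (· = a) (h i (Finset.mem_singleton_self i))

theorem dependsOn_update {X : Set (ι → Bool)} {a : ι} {F : Finset ι}
    (hX : DependsOn (· ∈ X) ↑(insert a F)) (b : Bool) :
    DependsOn (· ∈ {ω | Function.update ω a b ∈ X}) ↑F := fun ω ω' h =>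
  hX fun e he => by
    rcases eq_or_ne e a with rfl | hea
    · simp
    · simpa [hea] using h e (by simpa [hea] using he)

end DependsOn

theorem ENNReal.mul_add_mul_le_of_sum_eq_one {p q p' q' a b : ℝ≥0∞} (hpq : p + q = 1)
    (hpq' : p' + q' = 1) (hp : p ≤ p') (hba : b ≤ a) : p * a + q * b ≤ p' * a + q' * b := by
  have hp_top : p ≠ ⊤ := ne_top_of_le_ne_top one_ne_top (hpq ▸ le_self_add)
  have hq : q = q' + (p' - p) := by
    refine (ENNReal.add_right_inj hp_top).mp ?_
    rw [hpq, add_left_comm, add_tsub_cancel_of_le hp, add_comm, hpq']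
  calc p * a + q * b = p * a + q' * b + (p' - p) * b := by rw [hq, add_mul, add_assoc]
    _ ≤ p * a + q' * b + (p' - p) * a := by gcongr
    _ = p' * a + q' * b := by
      rw [add_right_comm, ← add_mul, add_tsub_cancel_of_le hp]

theorem ENNReal.le_mul_inv_of_le_add_mul {a b δ : ℝ≥0∞} (ha : a ≠ ⊤) (hδ : δ < 1)
    (h : a ≤ b + δ * a) : a ≤ b * (1 - δ)⁻¹ := by
  have hle : a * (1 - δ) ≤ b := by
    rw [mul_comm, ENNReal.sub_mul fun _ _ => ha, one_mul]
    exact tsub_le_iff_right.mpr h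
  rwa [← div_eq_mul_inv, ENNReal.le_div_iff_mul_le (.inl (tsub_pos_of_lt hδ).ne')
    (.inl (ENNReal.sub_ne_top one_ne_top))]

theorem exists_finset_exhaustion (α : Type*) [Countable α] :
    ∃ Λ : ℕ → Finset α, Monotone Λ ∧ ∀ a, ∃ n, a ∈ Λ n := by
  obtain ⟨f, hf⟩ := exists_injective_nat α
  refine ⟨fun n => (Finset.range n).preimage f hf.injOn, fun m n hmn a ha => ?_,
    fun a => ⟨f a + 1, by simp⟩⟩
  simp only [Finset.mem_preimage, Finset.mem_range] at ha ⊢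
  omega

namespace ProbabilityTheory

variable {ι : Type*} {μ μ' : Measure (ι → Bool)}

theorem iIndepFun_eval_of_measure_cylinder [IsProbabilityMeasure μ]
    (h : ∀ (F : Finset ι) (σ : ι → Bool),
      μ {ω | ∀ e ∈ F, ω e = σ e} = ∏ e ∈ F, μ {ω | ω e = σ e}) :
    iIndepFun (fun e ω => ω e) μ := by
  set π : ι → Set (Set (ι → Bool)) := fun e => insert ∅ (range fun b => {ω | ω e = b})
  have hpi : ∀ e, IsPiSystem (π e) := by
    refine fun e => IsPiSystem.insert_empty ?_
    rintro _ ⟨b, rfl⟩ _ ⟨b', rfl⟩ ⟨ω, hb, hb'⟩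
    obtain rfl : b = b' := hb.symm.trans hb'
    exact ⟨b, (inter_self _).symm⟩
  have hgen : ∀ e, MeasurableSpace.comap (fun ω : ι → Bool => ω e) inferInstance =
      MeasurableSpace.generateFrom (π e) := by
    refine fun e => le_antisymm ?_ (MeasurableSpace.generateFrom_le ?_)
    · rintro _ ⟨B, -, rfl⟩
      have : (fun ω : ι → Bool => ω e) ⁻¹' B = ⋃ b ∈ B, {ω | ω e = b} := by ext; simp
      rw [this]
      exact .biUnion B.to_countable fun b _ =>
        MeasurableSpace.measurableSet_generateFrom (mem_insert_of_mem _ ⟨b, rfl⟩)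
    · rintro _ (rfl | ⟨b, rfl⟩)
      · exact (MeasurableSpace.comap _ _).measurableSet_empty
      · exact ⟨{b}, trivial, rfl⟩
  rw [iIndepFun_iff_iIndep]
  refine iIndepSets.iIndep (fun e => (measurable_pi_apply e).comap_le) π hpi hgen ?_
  rw [iIndepSets_iff]
  intro F f hf
  by_cases hempty : ∃ e ∈ F, f e = ∅
  · obtain ⟨e, he, hfe⟩ := hempty
    rw [Finset.prod_eq_zero he (by rw [hfe, measure_empty])]
    exact measure_mono_null (biInter_subset_of_mem he) (by rw [hfe, measure_empty])
  · have : ∀ e ∈ F, ∃ b, f e = {ω | ω e = b} := fun e he =>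
      ((hf e he).resolve_left fun h => hempty ⟨e, he, h⟩).imp fun _ h => h.symm
    choose! σ hσ using this
    rw [Finset.prod_congr rfl fun e he => by rw [hσ e he], ← h F σ]
    congr 1
    ext ω
    simp +contextual [hσ]

theorem measure_inter_eq_mul_of_dependsOn (hμ : iIndepFun (fun e ω => ω e) μ)
    {X Y : Set (ι → Bool)} {F G : Finset ι} (hX : DependsOn (· ∈ X) ↑F)
    (hY : DependsOn (· ∈ Y) ↑G) (hFG : Disjoint F G) : μ (X ∩ Y) = μ X * μ Y := by
  rw [← preimage_image_restrict_of_dependsOn hX, ← preimage_image_restrict_of_dependsOn hY]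
  exact (hμ.indepFun_finset F G hFG fun e => measurable_pi_apply e).measure_inter_preimage_eq_mul
    _ _ (toFinite _).measurableSet (toFinite _).measurableSet

theorem measure_eq_sum_update (hμ : iIndepFun (fun e ω => ω e) μ) {X : Set (ι → Bool)}
    {a : ι} {F : Finset ι} (ha : a ∉ F) (hX : DependsOn (· ∈ X) ↑(insert a F)) :
    μ X = ∑ b : Bool, μ {ω | ω a = b} * μ {ω | Function.update ω a b ∈ X} := by
  have hslice := dependsOn_update hX
  have hedge := dependsOn_eval_eq (α := Bool) a
  have hsplit : X = ⋃ b : Bool, {ω | ω a = b} ∩ {ω | Function.update ω a b ∈ X} := by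
    ext ω
    simp only [mem_iUnion, mem_inter_iff, mem_ofPred_eq]
    exact ⟨fun h => ⟨ω a, rfl, by simpa using h⟩, by rintro ⟨b, rfl, h⟩; simpa using h⟩
  conv_lhs => rw [hsplit]
  rw [measure_iUnion (fun b b' hbb' => disjoint_left.mpr fun ω h h' => hbb' (h.1.symm.trans h'.1))
    fun b => (measurableSet_of_dependsOn (hedge b)).inter (measurableSet_of_dependsOn (hslice b)),
    tsum_fintype]
  exact Finset.sum_congr rfl fun b _ =>
    measure_inter_eq_mul_of_dependsOn hμ (hedge b) (hslice b) (by simpa using ha)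

theorem measure_le_of_isUpperSet (hμ : iIndepFun (fun e ω => ω e) μ)
    (hμ' : iIndepFun (fun e ω => ω e) μ')
    (hle : ∀ e, μ {ω | ω e = true} ≤ μ' {ω | ω e = true}) {F : Finset ι} {X : Set (ι → Bool)}
    (hX : DependsOn (· ∈ X) ↑F) (hup : IsUpperSet X) : μ X ≤ μ' X := by
  have := hμ.isProbabilityMeasure
  have := hμ'.isProbabilityMeasure
  induction F using Finset.induction_on generalizing X with
  | empty =>
    rcases X.eq_empty_or_nonempty with rfl | ⟨ω₀, hω₀⟩
    · simp
    · have : X = univ := eq_univ_of_forall fun ω => cast (hX (by simp)) hω₀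
      simp [this]
  | @insert a F ha ih =>
    have hsum : ∀ (ν : Measure (ι → Bool)) [IsProbabilityMeasure ν],
        ν {ω | ω a = true} + ν {ω | ω a = false} = 1 := fun ν _ => by
      have : {ω : ι → Bool | ω a = false} = {ω | ω a = true}ᶜ := by ext; simp
      rw [this, measure_add_measure_compl (measurableSet_eq_fun (measurable_pi_apply a)
        measurable_const), measure_univ]
    have hslice_up : ∀ b, IsUpperSet {ω | Function.update ω a b ∈ X} := fun b ω ω' hωω' h =>
      hup (update_le_update_iff.mpr ⟨le_rfl, fun j _ => hωω' j⟩) h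
    have hslice_mono : {ω | Function.update ω a false ∈ X} ⊆ {ω | Function.update ω a true ∈ X} :=
      fun ω h => hup (update_le_update_iff.mpr ⟨Bool.false_le _, fun _ _ => le_rfl⟩) h
    rw [measure_eq_sum_update hμ ha hX, measure_eq_sum_update hμ' ha hX, Fintype.sum_bool,
      Fintype.sum_bool]
    calc _ ≤ μ {ω | ω a = true} * μ' {ω | Function.update ω a true ∈ X} +
          μ {ω | ω a = false} * μ' {ω | Function.update ω a false ∈ X} := by
          gcongr _ * ?_ + _ * ?_ <;> exact ih (dependsOn_update hX _) (hslice_up _)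
      _ ≤ _ := ENNReal.mul_add_mul_le_of_sum_eq_one (hsum μ) (hsum μ') (hle a)
          (measure_mono hslice_mono)

theorem map_comp_eq_self_of_iIndepFun (hμ : iIndepFun (fun e ω => ω e) μ) {g : ι → ι}
    (hg : g.Injective) (hmarg : ∀ e, μ.map (fun ω => ω (g e)) = μ.map (fun ω => ω e)) :
    μ.map (fun ω => ω ∘ g) = μ := by
  have hcoord : ∀ e, Measurable fun ω : ι → Bool => ω e := measurable_pi_apply
  calc μ.map (fun ω => ω ∘ g)
      = Measure.infinitePi fun e => μ.map (fun ω => ω (g e)) :=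
        (hμ.precomp hg).map_fun_eq_infinitePi_map fun e => hcoord (g e)
    _ = Measure.infinitePi fun e => μ.map (fun ω => ω e) := by simp_rw [hmarg]
    _ = μ.map (fun ω e => ω e) := (hμ.map_fun_eq_infinitePi_map hcoord).symm
    _ = μ := Measure.map_id

end ProbabilityTheory

namespace InhomPerc

open ProbabilityTheory

variable {V : Type*} {N : ℕ} {E : Fin N → Set (Sym2 V)} {P : (Fin N → ℝ) → Measure (Config V)}
  {r r' : Fin N → ℝ} {ω : Config V} {x y : V}

def IsColourAut (E : Fin N → Set (Sym2 V)) (f : V ≃ V) : Prop :=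
  ∀ (i : Fin N) (e : Sym2 V), e ∈ E i ↔ e.map f ∈ E i

theorem IsColourAut.symm {f : V ≃ V} (hf : IsColourAut E f) : IsColourAut E f.symm :=
  fun i e => by simpa [Sym2.map_map] using (hf i (e.map f.symm)).symm

theorem edgeProb_map {f : V ≃ V} (hf : IsColourAut E f) (e : Sym2 V) :
    edgeProb E r (e.map f) = edgeProb E r e :=
  Finset.sum_congr rfl fun i _ => by simp only [← hf i e]

theorem edgeProb_mono (hle : ∀ i, r i ≤ r' i) (e : Sym2 V) : edgeProb E r e ≤ edgeProb E r' e :=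
  Finset.sum_le_sum fun i _ => by split_ifs <;> simp [hle i]

section PercolationMeasure

variable (hP : IsPercFamily E P) (hr : ∀ i, r i ∈ Icc (0 : ℝ) 1)
include hP hr

theorem IsPercFamily.measure_edge (e : Sym2 V) (b : Bool) :
    P r {ω | ω e = b} = ENNReal.ofReal (if b then edgeProb E r e else 1 - edgeProb E r e) := by
  simpa using (hP r hr).2 {e} fun _ => b

theorem IsPercFamily.iIndepFun : iIndepFun (fun e ω => ω e) (P r) := by
  have := (hP r hr).1
  refine iIndepFun_eval_of_measure_cylinder fun F σ => ?_
  rw [(hP r hr).2 F σ]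
  exact Finset.prod_congr rfl fun e _ => (hP.measure_edge hr e (σ e)).symm

theorem IsPercFamily.measure_mono (hr' : ∀ i, r' i ∈ Icc (0 : ℝ) 1) (hle : ∀ i, r i ≤ r' i)
    {X : Set (Config V)} {F : Finset (Sym2 V)} (hX : DependsOn (· ∈ X) ↑F) (hup : IsUpperSet X) :
    P r X ≤ P r' X := by
  refine measure_le_of_isUpperSet (hP.iIndepFun hr) (hP.iIndepFun hr') (fun e => ?_) hX hup
  simp only [hP.measure_edge hr, hP.measure_edge hr', if_true]
  exact ENNReal.ofReal_le_ofReal (edgeProb_mono hle e)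

theorem IsPercFamily.map_comp_aut {f : V ≃ V} (hf : IsColourAut E f) :
    (P r).map (fun ω => ω ∘ Sym2.map f) = P r := by
  refine map_comp_eq_self_of_iIndepFun (hP.iIndepFun hr) (Sym2.map.injective f.injective)
    fun e => Measure.ext_of_singleton fun b => ?_
  rw [Measure.map_apply (measurable_pi_apply (Sym2.map f e)) (measurableSet_singleton b),
    Measure.map_apply (measurable_pi_apply e) (measurableSet_singleton b)]
  simp only [preimage, mem_singleton_iff, hP.measure_edge hr, edgeProb_map hf]

end PercolationMeasure

section Connectivity

theorem ConnIn.mono_set {S S' : Set V} (h : ConnIn E ω S x y) (hSS' : S ⊆ S') :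
    ConnIn E ω S' x y :=
  Relation.ReflTransGen.mono (fun _ _ hab => ⟨hSS' hab.1, hSS' hab.2.1, hab.2.2⟩) _ _ h

theorem ConnIn.eq_or_mem {S : Set V} (h : ConnIn E ω S x y) : y = x ∨ y ∈ S :=
  h.cases_tail.imp_right fun ⟨_, _, hcy⟩ => hcy.2.1

theorem isUpperSet_connIn (S : Set V) (x y : V) : IsUpperSet {ω : Config V | ConnIn E ω S x y} :=
  fun _ _ hωω' => Relation.ReflTransGen.mono (fun a b hab =>
    ⟨hab.1, hab.2.1, hab.2.2.1, Bool.le_iff_imp.mp (hωω' s(a, b)) hab.2.2.2⟩) _ _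

theorem ConnIn.congr {S : Set V} {ω' : Config V}
    (hω : ∀ a b, a ∈ S → b ∈ S → ω s(a, b) = ω' s(a, b)) (h : ConnIn E ω S x y) :
    ConnIn E ω' S x y :=
  Relation.ReflTransGen.mono (fun a b hab =>
    ⟨hab.1, hab.2.1, hab.2.2.1, hω a b hab.1 hab.2.1 ▸ hab.2.2.2⟩) _ _ h

theorem dependsOn_connIn (S : Finset V) (x y : V) :
    DependsOn (· ∈ {ω : Config V | ConnIn E ω ↑S x y}) ↑S.sym2 := fun ω ω' h => by
  have hagree : ∀ a b, a ∈ (S : Set V) → b ∈ (S : Set V) → ω s(a, b) = ω' s(a, b) :=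
    fun a b ha hb => h _ (Finset.mk_mem_sym2_iff.mpr ⟨ha, hb⟩)
  exact propext ⟨ConnIn.congr hagree, ConnIn.congr fun a b ha hb => (hagree a b ha hb).symm⟩

theorem mem_eset_map_iff {f : V ≃ V} (hf : IsColourAut E f) (e : Sym2 V) :
    e.map f ∈ Eset E ↔ e ∈ Eset E := by
  simp only [Eset, mem_iUnion, ← hf _ e]

theorem ConnIn.of_comp_map {f : V ≃ V} (hf : IsColourAut E f) {S : Set V}
    (h : ConnIn E (ω ∘ Sym2.map f) S x y) : ConnIn E ω (f '' S) (f x) (f y) := by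
  refine Relation.ReflTransGen.lift f (fun a b hab => ⟨mem_image_of_mem f hab.1,
    mem_image_of_mem f hab.2.1, ?_, hab.2.2.2⟩) _ _ h
  rw [← Sym2.map_mk, mem_eset_map_iff hf]
  exact hab.2.2.1

theorem connIn_comp_map_iff {f : V ≃ V} (hf : IsColourAut E f) {S : Set V} :
    ConnIn E (ω ∘ Sym2.map f) S x y ↔ ConnIn E ω (f '' S) (f x) (f y) := by
  refine ⟨ConnIn.of_comp_map hf, fun h => ?_⟩
  have hω : (ω ∘ Sym2.map f) ∘ Sym2.map f.symm = ω := by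
    ext e
    simp [Sym2.map_map]
  have := (hω ▸ h : ConnIn E ((ω ∘ Sym2.map f) ∘ Sym2.map f.symm) _ _ _).of_comp_map hf.symm
  rwa [Equiv.symm_image_image, Equiv.symm_apply_apply, Equiv.symm_apply_apply] at this

noncomputable def clusterIn (E : Fin N → Set (Sym2 V)) (ω : Config V) (S : Finset V) (x : V) :
    Finset V :=
  S.filter (ConnIn E ω ↑S x ·)

theorem mem_clusterIn {S : Finset V} {u : V} :
    u ∈ clusterIn E ω S x ↔ u ∈ S ∧ ConnIn E ω ↑S x u :=
  Finset.mem_filter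

theorem dependsOn_clusterIn_eq (S A : Finset V) (x : V) :
    DependsOn (· ∈ {ω : Config V | clusterIn E ω S x = A})
      ↑(S.sym2.filter fun e => ∃ a ∈ A, a ∈ e) := by
  suffices key : ∀ ω ω' : Config V,
      (∀ e ∈ S.sym2.filter (fun e => ∃ a ∈ A, a ∈ e), ω e = ω' e) →
      clusterIn E ω S x = A → clusterIn E ω' S x = A from
    fun ω ω' h => propext ⟨key ω ω' h, key ω' ω fun e he => (h e he).symm⟩
  intro ω ω' h hA
  have hagree : ∀ b u, b ∈ A → b ∈ S → u ∈ S → ω s(b, u) = ω' s(b, u) := fun b u hbA hb hu =>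
    h _ (Finset.mem_filter.mpr ⟨Finset.mk_mem_sym2_iff.mpr ⟨hb, hu⟩, b, hbA, Sym2.mem_mk_left b u⟩)
  have hmemA : ∀ b, b ∈ S → ConnIn E ω ↑S x b → b ∈ A := fun b hb hxb =>
    hA ▸ mem_clusterIn.mpr ⟨hb, hxb⟩
  have h₁ : ∀ u, ConnIn E ω' ↑S x u → ConnIn E ω ↑S x u := fun u h' => by
    induction h' with
    | refl => exact .refl
    | tail _ hbc ih =>
      exact ih.tail ⟨hbc.1, hbc.2.1, hbc.2.2.1,
        (hagree _ _ (hmemA _ hbc.1 ih) hbc.1 hbc.2.1).trans hbc.2.2.2⟩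
  have h₂ : ∀ u, ConnIn E ω ↑S x u → ConnIn E ω' ↑S x u := fun u h' => by
    induction h' with
    | refl => exact .refl
    | tail hxb hbc ih =>
      exact ih.tail ⟨hbc.1, hbc.2.1, hbc.2.2.1,
        (hagree _ _ (hmemA _ hbc.1 hxb) hbc.1 hbc.2.1).symm.trans hbc.2.2.2⟩
  ext u
  rw [← hA, mem_clusterIn, mem_clusterIn]
  exact and_congr_right fun _ => ⟨h₁ u, h₂ u⟩

theorem ConnIn.exists_exit_clusterIn {S Λ : Finset V} (hxS : x ∈ S) (hyS : y ∉ S)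
    (h : ConnIn E ω ↑Λ x y) :
    ∃ u ∈ clusterIn E ω S x, ∃ v ∈ Λ \ S, ω s(u, v) = true ∧
      ConnIn E ω ↑(Λ \ clusterIn E ω S x) v y := by
  set A := clusterIn E ω S x
  obtain ⟨u, hu, v, hv, huv, hvy⟩ := Relation.ReflTransGen.exists_last_exit (A := (A : Set V)) h
    (mem_clusterIn.mpr ⟨hxS, .refl⟩) fun hy => hyS (mem_clusterIn.mp hy).1
  obtain ⟨huS, hxu⟩ := mem_clusterIn.mp hu
  have hvS : v ∉ S := fun hvS =>
    hv (mem_clusterIn.mpr ⟨hvS, hxu.tail ⟨huS, hvS, huv.2.2.1, huv.2.2.2⟩⟩)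
  refine ⟨u, hu, v, Finset.mem_sdiff.mpr ⟨huv.2.1, hvS⟩, huv.2.2.2, ?_⟩
  refine Relation.ReflTransGen.mono (fun a b hab => ⟨?_, ?_, hab.1.2.2⟩) _ _ hvy
  · simpa using ⟨hab.1.1, hab.2.1⟩
  · simpa using ⟨hab.1.2.1, hab.2.2⟩

end Connectivity

section SimonLieb

theorem measurableSet_clusterIn_eq (S A : Finset V) (x : V) :
    MeasurableSet {ω : Config V | clusterIn E ω S x = A} :=
  measurableSet_of_dependsOn (dependsOn_clusterIn_eq S A x)

theorem measure_eq_sum_clusterIn (μ : Measure (Config V)) (S : Finset V) (x : V)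
    (X : Set (Config V)) : μ X = ∑ A ∈ S.powerset, μ (X ∩ {ω | clusterIn E ω S x = A}) := by
  have hsum := sum_measure_preimage_singleton (μ := μ.restrict X) S.powerset
    (f := fun ω => clusterIn E ω S x) fun A _ => measurableSet_clusterIn_eq S A x
  have hcover : (fun ω => clusterIn E ω S x) ⁻¹' ↑S.powerset = univ :=
    eq_univ_of_forall fun ω => Finset.mem_powerset.mpr (Finset.filter_subset _ _)
  rw [hcover, Measure.restrict_apply_univ] at hsum
  rw [← hsum]
  refine Finset.sum_congr rfl fun A _ => ?_
  rw [Measure.restrict_apply (by exact measurableSet_clusterIn_eq S A x), inter_comm]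
  rfl

theorem measure_connIn_eq_sum_clusterIn (μ : Measure (Config V)) {S : Finset V} {u : V}
    (hu : u ∈ S) : μ {ω | ConnIn E ω ↑S x u} =
      ∑ A ∈ S.powerset, if u ∈ A then μ {ω | clusterIn E ω S x = A} else 0 := by
  rw [measure_eq_sum_clusterIn μ S x]
  refine Finset.sum_congr rfl fun A _ => ?_
  split_ifs with huA
  · refine congrArg μ (inter_eq_right.mpr fun ω (hω : clusterIn E ω S x = A) => ?_)
    exact (mem_clusterIn.mp (hω ▸ huA)).2
  · refine measure_mono_null (fun ω ⟨hxu, (hω : clusterIn E ω S x = A)⟩ => ?_) measure_empty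
    exact huA (hω ▸ mem_clusterIn.mpr ⟨hu, hxu⟩)

theorem sum_boundary_le_psi (hr : ∀ i, 0 ≤ r i) (S Λ : Finset V) (x : V) :
    ∑ u ∈ S, ∑ v ∈ Λ \ S, P r {ω | ConnIn E ω ↑S x u} * ENNReal.ofReal (edgeProb E r s(u, v)) ≤
      psi E P r x S := by
  have hexp : ∀ e, ENNReal.ofReal (edgeProb E r e) =
      ∑ i, if e ∈ E i then ENNReal.ofReal (r i) else 0 := fun e => by
    rw [edgeProb, ENNReal.ofReal_sum_of_nonneg fun i _ => by split_ifs; exacts [hr i, le_rfl]]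
    exact Finset.sum_congr rfl fun i _ => by split_ifs <;> simp
  calc _ = ∑ u ∈ S, ∑ v ∈ Λ \ S, ∑ i, ENNReal.ofReal (r i) *
        (if v ∉ S ∧ s(u, v) ∈ E i then P r {ω | ConnIn E ω ↑S x u} else 0) := by
        refine Finset.sum_congr rfl fun u _ => Finset.sum_congr rfl fun v hv => ?_
        rw [hexp, Finset.mul_sum]
        refine Finset.sum_congr rfl fun i _ => ?_
        by_cases h : s(u, v) ∈ E i <;> simp [h, (Finset.mem_sdiff.mp hv).2, mul_comm]
    _ = ∑ i, ENNReal.ofReal (r i) * ∑ u ∈ S, ∑ v ∈ Λ \ S,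
        (if v ∉ S ∧ s(u, v) ∈ E i then P r {ω | ConnIn E ω ↑S x u} else 0) := by
        simp_rw [Finset.mul_sum]
        symm
        rw [Finset.sum_comm]
        exact Finset.sum_congr rfl fun u _ => Finset.sum_comm
    _ ≤ psi E P r x S := by
        unfold psi
        gcongr with i _ u _
        exact ENNReal.sum_le_tsum _

variable (hP : IsPercFamily E P) (hr : ∀ i, r i ∈ Icc (0 : ℝ) 1)
include hP hr

theorem measure_connIn_inter_clusterIn_le {S Λ : Finset V} (A : Finset V) (hxS : x ∈ S)
    (hyS : y ∉ S) :
    P r ({ω | ConnIn E ω ↑Λ x y} ∩ {ω | clusterIn E ω S x = A}) ≤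
      ∑ u ∈ A, ∑ v ∈ Λ \ S, P r {ω | clusterIn E ω S x = A} *
        (ENNReal.ofReal (edgeProb E r s(u, v)) * P r {ω | ConnIn E ω ↑Λ v y}) := by
  have hincl : {ω | ConnIn E ω ↑Λ x y} ∩ {ω | clusterIn E ω S x = A} ⊆
      ⋃ u ∈ A, ⋃ v ∈ Λ \ S, {ω | clusterIn E ω S x = A} ∩
        ({ω | ω s(u, v) = true} ∩ {ω | ConnIn E ω ↑(Λ \ A) v y}) := by
    rintro ω ⟨hxy, hA : clusterIn E ω S x = A⟩
    obtain ⟨u, hu, v, hv, huv, hvy⟩ := ConnIn.exists_exit_clusterIn hxS hyS hxy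
    rw [hA] at hu hvy
    exact mem_biUnion hu (mem_biUnion hv ⟨hA, huv, hvy⟩)
  refine (measure_mono hincl).trans <| (measure_biUnion_finset_le _ _).trans <|
    Finset.sum_le_sum fun u hu => (measure_biUnion_finset_le _ _).trans <|
    Finset.sum_le_sum fun v hv => ?_
  have hvS := (Finset.mem_sdiff.mp hv).2
  have hμ := hP.iIndepFun hr
  have hrest : DependsOn (· ∈ {ω | ω s(u, v) = true} ∩ {ω | ConnIn E ω ↑(Λ \ A) v y})
      ↑({s(u, v)} ∪ (Λ \ A).sym2) := by
    rw [Finset.coe_union]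
    exact dependsOn_mem_inter (dependsOn_eval_eq _ _) (dependsOn_connIn _ v y)
  rw [measure_inter_eq_mul_of_dependsOn hμ (dependsOn_clusterIn_eq S A x) hrest ?_,
    measure_inter_eq_mul_of_dependsOn hμ (dependsOn_eval_eq _ _) (dependsOn_connIn _ v y) ?_,
    hP.measure_edge hr, if_pos rfl]
  · gcongr
    exact fun h => h.mono_set (Finset.coe_subset.mpr Finset.sdiff_subset)
  · rw [Finset.disjoint_singleton_left, Finset.mk_mem_sym2_iff]
    exact fun h => (Finset.mem_sdiff.mp h.1).2 hu
  · rw [Finset.disjoint_left]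
    intro e he he'
    obtain ⟨heS, a, haA, hae⟩ := Finset.mem_filter.mp he
    rcases Finset.mem_union.mp he' with h | h
    · rw [Finset.mem_singleton.mp h, Finset.mk_mem_sym2_iff] at heS
      exact hvS heS.2
    · exact (Finset.mem_sdiff.mp (Finset.mem_sym2_iff.mp h a hae)).2 haA

theorem measure_connIn_le_sum {S Λ : Finset V} (hxS : x ∈ S) (hyS : y ∉ S) :
    P r {ω | ConnIn E ω ↑Λ x y} ≤ ∑ u ∈ S, ∑ v ∈ Λ \ S, P r {ω | ConnIn E ω ↑S x u} *
      (ENNReal.ofReal (edgeProb E r s(u, v)) * P r {ω | ConnIn E ω ↑Λ v y}) := by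
  set c : V → V → ℝ≥0∞ := fun u v =>
    ENNReal.ofReal (edgeProb E r s(u, v)) * P r {ω | ConnIn E ω ↑Λ v y}
  set C : Finset V → Set (Config V) := fun A => {ω | clusterIn E ω S x = A}
  calc P r {ω | ConnIn E ω ↑Λ x y}
      = ∑ A ∈ S.powerset, P r ({ω | ConnIn E ω ↑Λ x y} ∩ C A) :=
        measure_eq_sum_clusterIn _ S x _
    _ ≤ ∑ A ∈ S.powerset, ∑ u ∈ S, if u ∈ A then ∑ v ∈ Λ \ S, P r (C A) * c u v else 0 := by
        gcongr with A hA
        rw [Finset.sum_ite_mem, Finset.inter_eq_right.mpr (Finset.mem_powerset.mp hA)]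
        exact measure_connIn_inter_clusterIn_le hP hr A hxS hyS
    _ = ∑ u ∈ S, ∑ v ∈ Λ \ S, P r {ω | ConnIn E ω ↑S x u} * c u v := by
        rw [Finset.sum_comm]
        refine Finset.sum_congr rfl fun u hu => ?_
        simp only [measure_connIn_eq_sum_clusterIn _ hu, Finset.sum_mul, ite_mul, zero_mul]
        rw [Finset.sum_comm]
        exact Finset.sum_congr rfl fun A _ => by split_ifs <;> simp [C]

end SimonLieb

section FiniteVolume

-- Bounded by `Λ.card + 1`; this a priori finiteness is what lets `χ_Λ ≤ M + δ χ_Λ` be solved.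
noncomputable def chiIn (E : Fin N → Set (Sym2 V)) (P : (Fin N → ℝ) → Measure (Config V))
    (r : Fin N → ℝ) (Λ : Finset V) : ℝ≥0∞ :=
  ⨆ (x : V) (T : Finset V), ∑ y ∈ T, P r {ω | ConnIn E ω ↑Λ x y}

theorem chiIn_le_card_add_one [IsProbabilityMeasure (P r)] (Λ : Finset V) :
    chiIn E P r Λ ≤ Λ.card + 1 := by
  refine iSup₂_le fun x T => ?_
  calc ∑ y ∈ T, P r {ω | ConnIn E ω ↑Λ x y}
      ≤ ∑ y ∈ T, if y ∈ insert x Λ then 1 else 0 := Finset.sum_le_sum fun y _ => by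
        split_ifs with hy
        · exact prob_le_one
        · refine (measure_mono_null (fun ω (h : ConnIn E ω ↑Λ x y) => ?_) measure_empty).le
          exact hy (Finset.mem_insert.mpr h.eq_or_mem)
    _ = (T ∩ insert x Λ).card := by rw [Finset.sum_ite_mem, Finset.sum_const, nsmul_one]
    _ ≤ Λ.card + 1 := by
        exact_mod_cast (Finset.card_le_card Finset.inter_subset_right).trans
          (Finset.card_insert_le _ _)

theorem chiIn_le_add_mul (hP : IsPercFamily E P) (hr : ∀ i, r i ∈ Icc (0 : ℝ) 1) {M : ℕ}
    {δ : ℝ≥0∞} (hS : ∀ x, ∃ S : Finset V, x ∈ S ∧ S.card ≤ M ∧ psi E P r x S ≤ δ)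
    (Λ : Finset V) : chiIn E P r Λ ≤ M + δ * chiIn E P r Λ := by
  have := (hP r hr).1
  refine iSup₂_le fun x T => ?_
  obtain ⟨S, hxS, hcard, hψ⟩ := hS x
  rw [← Finset.sum_filter_add_sum_filter_not T (· ∈ S)]
  gcongr ?_ + ?_
  · calc ∑ y ∈ T.filter (· ∈ S), P r {ω | ConnIn E ω ↑Λ x y}
        ≤ ∑ y ∈ T.filter (· ∈ S), 1 := Finset.sum_le_sum fun _ _ => prob_le_one
      _ ≤ M := by
        rw [Finset.sum_const, nsmul_one]
        exact_mod_cast (Finset.card_le_card fun y hy => (Finset.mem_filter.mp hy).2).trans hcard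
  · calc ∑ y ∈ T.filter (· ∉ S), P r {ω | ConnIn E ω ↑Λ x y}
        ≤ ∑ y ∈ T.filter (· ∉ S), ∑ u ∈ S, ∑ v ∈ Λ \ S, P r {ω | ConnIn E ω ↑S x u} *
            (ENNReal.ofReal (edgeProb E r s(u, v)) * P r {ω | ConnIn E ω ↑Λ v y}) :=
          Finset.sum_le_sum fun y hy => measure_connIn_le_sum hP hr hxS (Finset.mem_filter.mp hy).2
      _ = ∑ u ∈ S, ∑ v ∈ Λ \ S, P r {ω | ConnIn E ω ↑S x u} *
            (ENNReal.ofReal (edgeProb E r s(u, v)) *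
              ∑ y ∈ T.filter (· ∉ S), P r {ω | ConnIn E ω ↑Λ v y}) := by
          rw [Finset.sum_comm]
          refine Finset.sum_congr rfl fun u _ => ?_
          rw [Finset.sum_comm]
          simp_rw [Finset.mul_sum]
      _ ≤ ∑ u ∈ S, ∑ v ∈ Λ \ S, P r {ω | ConnIn E ω ↑S x u} *
            (ENNReal.ofReal (edgeProb E r s(u, v)) * chiIn E P r Λ) := by
          gcongr with u _ v _
          exact le_iSup₂_of_le (f := fun v T => ∑ y ∈ T, P r {ω | ConnIn E ω ↑Λ v y}) v _ le_rfl
      _ ≤ δ * chiIn E P r Λ := by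
          simp_rw [← mul_assoc, ← Finset.sum_mul]
          gcongr
          exact (sum_boundary_le_psi (fun i => (hr i).1) S Λ x).trans hψ

theorem chiIn_le (hP : IsPercFamily E P) (hr : ∀ i, r i ∈ Icc (0 : ℝ) 1) {M : ℕ}
    {δ : ℝ≥0∞} (hδ : δ < 1)
    (hS : ∀ x, ∃ S : Finset V, x ∈ S ∧ S.card ≤ M ∧ psi E P r x S ≤ δ) (Λ : Finset V) :
    chiIn E P r Λ ≤ M * (1 - δ)⁻¹ :=
  have := (hP r hr).1
  ENNReal.le_mul_inv_of_le_add_mul (ne_top_of_le_ne_top (by simp) (chiIn_le_card_add_one Λ)) hδ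
    (chiIn_le_add_mul hP hr hS Λ)

end FiniteVolume

section Susceptibility

theorem connIn_univ_iff_exists {Λ : ℕ → Finset V} (hmono : Monotone Λ)
    (hcover : ∀ v, ∃ n, v ∈ Λ n) : ConnIn E ω univ x y ↔ ∃ n, ConnIn E ω ↑(Λ n) x y := by
  refine ⟨fun h => ?_, fun ⟨n, h⟩ => h.mono_set (subset_univ _)⟩
  induction h with
  | refl => exact ⟨0, .refl⟩
  | @tail b c _ hbc ih =>
    obtain ⟨n, hn⟩ := ih
    obtain ⟨nb, hb⟩ := hcover b
    obtain ⟨nc, hc⟩ := hcover c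
    refine ⟨max n (max nb nc), ?_⟩
    exact (hn.mono_set (Finset.coe_subset.mpr (hmono (le_max_left _ _)))).tail
      ⟨hmono (by omega) hb, hmono (by omega) hc, hbc.2.2⟩

theorem lintegral_encard_cluster [Countable V] (μ : Measure (Config V))
    (hmeas : ∀ y, MeasurableSet {ω | ConnIn E ω univ x y}) :
    ∫⁻ ω, ((cluster E ω x).encard : ℝ≥0∞) ∂μ = ∑' y, μ {ω | ConnIn E ω univ x y} := by
  have hencard : ∀ ω, ((cluster E ω x).encard : ℝ≥0∞) =
      ∑' y, {ω | ConnIn E ω univ x y}.indicator 1 ω := fun ω => by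
    rw [← ENNReal.tsum_set_one, tsum_subtype (cluster E ω x) fun _ => (1 : ℝ≥0∞)]
    simp [indicator_apply, cluster]
  simp_rw [hencard]
  rw [lintegral_tsum (f := fun y ω => {ω | ConnIn E ω univ x y}.indicator 1 ω)
    fun y => (measurable_const.indicator (hmeas y)).aemeasurable]
  simp_rw [lintegral_indicator_one (hmeas _)]

theorem chi_le [Countable V] (hP : IsPercFamily E P) (hr : ∀ i, r i ∈ Icc (0 : ℝ) 1) {M : ℕ}
    {δ : ℝ≥0∞} (hδ : δ < 1)
    (hS : ∀ x, ∃ S : Finset V, x ∈ S ∧ S.card ≤ M ∧ psi E P r x S ≤ δ) :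
    chi E P r ≤ M * (1 - δ)⁻¹ := by
  obtain ⟨Λ, hmono, hcover⟩ := exists_finset_exhaustion V
  have hΛ : ∀ x y, Monotone fun n => {ω : Config V | ConnIn E ω ↑(Λ n) x y} :=
    fun x y m n hmn ω h => h.mono_set (Finset.coe_subset.mpr (hmono hmn))
  have hunion : ∀ x y, {ω : Config V | ConnIn E ω univ x y} =
      ⋃ n, {ω | ConnIn E ω ↑(Λ n) x y} := fun x y => by
    ext ω
    simp only [mem_iUnion, mem_ofPred_eq]
    exact connIn_univ_iff_exists hmono hcover
  refine iSup_le fun x => ?_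
  rw [lintegral_encard_cluster _ fun y => hunion x y ▸
    MeasurableSet.iUnion fun n => measurableSet_of_dependsOn (dependsOn_connIn _ x y),
    ENNReal.tsum_eq_iSup_sum]
  refine iSup_le fun T => ?_
  simp_rw [hunion x, (hΛ x _).measure_iUnion]
  rw [ENNReal.finsetSum_iSup_of_monotone fun y m n hmn => measure_mono (hΛ x y hmn)]
  exact iSup_le fun n => (le_iSup₂_of_le x T le_rfl : _ ≤ chiIn E P r (Λ n)).trans
    (chiIn_le hP hr hδ hS (Λ n))

end Susceptibility

section Psi

theorem measure_connIn_image (hP : IsPercFamily E P) (hr : ∀ i, r i ∈ Icc (0 : ℝ) 1)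
    {f : V ≃ V} (hf : IsColourAut E f) (S : Finset V) (x y : V) :
    P r {ω | ConnIn E ω ↑(S.image f) (f x) (f y)} = P r {ω | ConnIn E ω ↑S x y} := by
  have hpre : {ω : Config V | ConnIn E ω ↑(S.image f) (f x) (f y)} =
      (fun ω => ω ∘ Sym2.map f) ⁻¹' {ω | ConnIn E ω ↑S x y} := by
    ext ω
    simp only [mem_preimage, mem_ofPred_eq, Finset.coe_image]
    exact (connIn_comp_map_iff hf).symm
  have hφ : Measurable fun ω : Config V => ω ∘ Sym2.map f :=
    measurable_pi_lambda _ fun e => measurable_pi_apply _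
  rw [hpre, ← Measure.map_apply hφ (measurableSet_of_dependsOn (dependsOn_connIn S x y)),
    hP.map_comp_aut hr hf]

theorem psi_image (hP : IsPercFamily E P) (hr : ∀ i, r i ∈ Icc (0 : ℝ) 1) {f : V ≃ V}
    (hf : IsColourAut E f) (x : V) (S : Finset V) :
    psi E P r (f x) (S.image f) = psi E P r x S := by
  refine Finset.sum_congr rfl fun i _ => congrArg _ ?_
  rw [Finset.sum_image fun a _ b _ h => f.injective h]
  refine Finset.sum_congr rfl fun y _ => ?_
  rw [← f.tsum_eq]
  refine tsum_congr fun z => ?_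
  have hyz := hf i s(y, z)
  rw [Sym2.map_mk] at hyz
  simp only [Finset.mem_image, EmbeddingLike.apply_eq_iff_eq, exists_eq_right, ← hyz,
    measure_connIn_image hP hr hf]

theorem psi_mono (hP : IsPercFamily E P) (hr : ∀ i, r i ∈ Icc (0 : ℝ) 1)
    (hr' : ∀ i, r' i ∈ Icc (0 : ℝ) 1) (hle : ∀ i, r i ≤ r' i) (x : V) (S : Finset V) :
    psi E P r x S ≤ psi E P r' x S := by
  refine Finset.sum_le_sum fun i _ => mul_le_mul' (ENNReal.ofReal_le_ofReal (hle i))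
    (Finset.sum_le_sum fun y _ => ENNReal.tsum_le_tsum fun z => ?_)
  split_ifs
  exacts [hP.measure_mono hr hr' hle (dependsOn_connIn S x y) (isUpperSet_connIn _ _ _), le_rfl]

end Psi

theorem QuasiTransitive.exists_uniform_bound (hqt : QuasiTransitive E)
    {Φ : V → Finset V → ℝ≥0∞}
    (hΦ : ∀ f : V ≃ V, IsColourAut E f → ∀ x S, Φ (f x) (S.image f) = Φ x S)
    (h : ∀ x, ∃ S : Finset V, x ∈ S ∧ Φ x S < 1) :
    ∃ (M : ℕ) (δ : ℝ≥0∞), δ < 1 ∧ ∀ x, ∃ S : Finset V, x ∈ S ∧ S.card ≤ M ∧ Φ x S ≤ δ := by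
  rcases isEmpty_or_nonempty V with hV | hV
  · exact ⟨0, 0, zero_lt_one, fun x => isEmptyElim x⟩
  obtain ⟨k, c, hc⟩ := hqt
  choose S hxS hlt using h
  set rep := Function.invFun c
  refine ⟨Finset.univ.sup fun i => (S (rep i)).card, Finset.univ.sup fun i => Φ (rep i) (S (rep i)),
    (Finset.sup_lt_iff zero_lt_one).mpr fun i _ => hlt _, fun x => ?_⟩
  obtain ⟨f, hf, hfx⟩ := hc x (rep (c x)) (Function.invFun_eq ⟨x, rfl⟩).symm
  refine ⟨(S (rep (c x))).image f, Finset.mem_image.mpr ⟨_, hxS _, hfx⟩, ?_, ?_⟩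
  · rw [Finset.card_image_of_injective _ f.injective]
    exact Finset.le_sup (f := fun i => (S (rep i)).card) (Finset.mem_univ (c x))
  · have hinv := hΦ f hf (rep (c x)) (S (rep (c x)))
    rw [hfx] at hinv
    rw [hinv]
    exact Finset.le_sup (f := fun i => Φ (rep i) (S (rep i))) (Finset.mem_univ (c x))

theorem chi_lt_top [Countable V] (hqt : QuasiTransitive E) (hP : IsPercFamily E P)
    (hr : ∀ i, r i ∈ Icc (0 : ℝ) 1) (h : ∀ x, ∃ S : Finset V, x ∈ S ∧ psi E P r x S < 1) :
    chi E P r < ⊤ := by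
  obtain ⟨M, δ, hδ, hS⟩ := hqt.exists_uniform_bound (fun f hf x S => psi_image hP hr hf x S) h
  exact (chi_le hP hr hδ hS).trans_lt <|
    ENNReal.mul_lt_top (ENNReal.natCast_lt_top M) (ENNReal.inv_lt_top.mpr (tsub_pos_of_lt hδ))

theorem pFull_mem_Icc {p : Fin (N - 1) → ℝ} {q : ℝ} (hp : ∀ i, p i ∈ Icc (0 : ℝ) 1)
    (hq : q ∈ Icc (0 : ℝ) 1) (i : Fin N) : pFull N p q i ∈ Icc (0 : ℝ) 1 := by
  unfold pFull
  split_ifs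
  exacts [hp _, hq]

theorem pFull_mono {p : Fin (N - 1) → ℝ} {q q' : ℝ} (hqq' : q ≤ q') (i : Fin N) :
    pFull N p q i ≤ pFull N p q' i := by
  unfold pFull
  split_ifs
  exacts [le_rfl, hqq']

theorem qPsi_le_one (E : Fin N → Set (Sym2 V)) (P : (Fin N → ℝ) → Measure (Config V))
    (p : Fin (N - 1) → ℝ) : qPsi E P p ≤ 1 :=
  Real.sSup_le (fun _ hq => hq.1.2) zero_le_one

theorem chi_pFull_lt_top [Countable V] (hqt : QuasiTransitive E) (hP : IsPercFamily E P)
    {p : Fin (N - 1) → ℝ} (hp : ∀ i, p i ∈ Icc (0 : ℝ) 1) {q : ℝ} (hq : 0 ≤ q)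
    (hqψ : q < qPsi E P p) : chi E P (pFull N p q) < ⊤ := by
  have hne : {q | q ∈ Icc (0 : ℝ) 1 ∧
      ∀ x : V, ∃ S : Finset V, x ∈ S ∧ psi E P (pFull N p q) x S < 1}.Nonempty := by
    refine nonempty_iff_ne_empty.mpr fun h => ?_
    rw [qPsi, h, Real.sSup_empty] at hqψ
    linarith
  obtain ⟨q', ⟨hq', hgood⟩, hqq'⟩ := exists_lt_of_lt_csSup hne hqψ
  have hqI : q ∈ Icc (0 : ℝ) 1 := ⟨hq, hqq'.le.trans hq'.2⟩
  refine chi_lt_top hqt hP (pFull_mem_Icc hp hqI) fun x => ?_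
  obtain ⟨S, hxS, hψ⟩ := hgood x
  exact ⟨S, hxS, (psi_mono hP (pFull_mem_Icc hp hqI) (pFull_mem_Icc hp hq')
    (pFull_mono hqq'.le) x S).trans_lt hψ⟩

theorem qPsi_le_qChi_general
    {V : Type*} [Countable V] {N : ℕ}
    (E : Fin N → Set (Sym2 V))
    (hqt : QuasiTransitive E)
    (P : (Fin N → ℝ) → Measure (Config V)) (hP : IsPercFamily E P)
    (p : Fin (N - 1) → ℝ) (hp : ∀ i, p i ∈ Icc (0 : ℝ) 1) :
    (∀ q : ℝ, 0 ≤ q → q < qPsi E P p → chi E P (pFull N p q) < ⊤) ∧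
      qPsi E P p ≤ qChi E P p := by
  refine ⟨fun q hq hqψ => chi_pFull_lt_top hqt hP hp hq hqψ, le_csInf ⟨1, mem_insert _ _⟩ ?_⟩
  rintro b (rfl | ⟨hb, hbχ⟩)
  · exact qPsi_le_one E P p
  · exact not_lt.mp fun hlt => (chi_pFull_lt_top hqt hP hp hb.1 hlt).ne hbχ

/-- If `q < q_ψ(p)` then `χ(p,q) < ∞`; consequently `q_ψ(p) ≤ q_χ(p)`. -/
theorem qPsi_le_qChi
    {V : Type*} [Countable V] [Infinite V] {N : ℕ} (hN : 0 < N)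
    (E : Fin N → Set (Sym2 V))
    (hdisj : DisjointColours E) (hloops : NoLoops E)
    (hlf : LocFin E) (hconn : ConnectedGraph E) (hqt : QuasiTransitive E)
    (P : (Fin N → ℝ) → Measure (Config V)) (hP : IsPercFamily E P)
    (p : Fin (N - 1) → ℝ) (hp : ∀ i, p i ∈ Icc (0 : ℝ) 1) :
    (∀ q : ℝ, 0 ≤ q → q < qPsi E P p → chi E P (pFull N p q) < ⊤) ∧
      qPsi E P p ≤ qChi E P p :=
  qPsi_le_qChi_general E hqt P hP p hp

end InhomPerc
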